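/- arXiv:1709.02884 — 2 statements merged into one kernel-verified Lean document; each statement's English description precedes it below -/
import Mathlib

section
/- For all integers m' ≥ 1, m ≥ 1 and every real T ≥ 1, the polytope P(m',m,T) = {(d',d) ∈ ℝ^{m'} × ℝ^{m} : d'_j ≥ 0 for all j, d_i ≥ 0 for all i, Σ_{i=1}^{m} d_i ≤ 1 − 1/T, and Σ_{j=1}^{m'} d'_j + Σ_{i=1}^{m} d_i ≤ 1} is equal to the convex hull (over ℝ) of the finite set S(m',m,T) consisting of: the origin; the m' points e'_j (j = 1,…,m'); the m points (1 − 1/T)·e_i (i = 1,…,m); and the m'·m points (1/T)·e'_j + (1 − 1/T)·e_i (j = 1,…,m', i = 1,…,m). -/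
/-!
With `c = 1 - 1/T`, write a point of the region as `(x, y)` with `y = c • v` and
`x = (1 - ∑ y) • u`, where `u` and `v` lie in the simplices `{z ≥ 0, ∑ z ≤ 1}`. Since
`∑ y = c * ∑ v` and `c + 1/T = 1`,
`(x, y) = (1 - ∑ v) • (u, 0) + ∑ i, v i • ((1/T) • u, c • e i)`,
and each point on the right lies in the hull of the corners, because `u` lies in the hull of
`0` and the `e' j`. Conversely the region is cut out by linear inequalities, hence convex, and
contains every corner.
-/

open Set
open scoped Pointwise

section CornerSimplex

variable {ι : Type*} [Fintype ι]

theorem exists_nonneg_sum_le_one_eq_smul {y : ι → ℝ} {c : ℝ} (hy : 0 ≤ y) (hsum : ∑ i, y i ≤ c) :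
    ∃ v : ι → ℝ, 0 ≤ v ∧ ∑ i, v i ≤ 1 ∧ y = c • v := by
  have hsum0 : 0 ≤ ∑ i, y i := Finset.sum_nonneg fun i _ => hy i
  rcases (hsum0.trans hsum).eq_or_lt with rfl | hc
  · have hy0 : y = 0 := funext fun i =>
      (Finset.sum_eq_zero_iff_of_nonneg fun i _ => hy i).1 (hsum.antisymm hsum0) i
        (Finset.mem_univ i)
    exact ⟨0, le_rfl, by simp, by simp [hy0]⟩
  · refine ⟨c⁻¹ • y, smul_nonneg (inv_nonneg.2 hc.le) hy, ?_, (smul_inv_smul₀ hc.ne' y).symm⟩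
    simpa [← Finset.mul_sum, inv_mul_le_iff₀ hc] using hsum

theorem mem_convexHull_insert_zero_range_single [DecidableEq ι] {x : ι → ℝ} (hx : 0 ≤ x)
    (hsum : ∑ i, x i ≤ 1) :
    x ∈ convexHull ℝ (insert 0 (range fun i => Pi.single i (1 : ℝ))) := by
  have hcomb :
      ∑ o : Option ι, o.elim (1 - ∑ i, x i) x • o.elim 0 (fun i => Pi.single i 1) = x := by
    simp [Fintype.sum_option, ← Pi.single_smul', Finset.univ_sum_single]
  rw [← hcomb]
  refine (convex_convexHull ℝ _).sum_mem (fun o _ => ?_) (by simp [Fintype.sum_option])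
    (fun o _ => ?_)
  · cases o with
    | none => simpa using hsum
    | some i => exact hx i
  · cases o with
    | none => exact subset_convexHull ℝ _ (mem_insert 0 _)
    | some i => exact subset_convexHull ℝ _ (mem_insert_of_mem 0 (mem_range_self i))

end CornerSimplex

theorem prodMk_smul_mem_convexHull_smul_prod {E F : Type*} [AddCommGroup E] [Module ℝ E]
    [AddCommGroup F] [Module ℝ F] {s : Set E} {a : E} (ha : a ∈ convexHull ℝ s) (r : ℝ) (w : F) :
    (r • a, w) ∈ convexHull ℝ ((r • s) ×ˢ {w}) := by
  rw [convexHull_prod, convexHull_smul, convexHull_singleton]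
  exact ⟨smul_mem_smul_set ha, rfl⟩

section DegreesOfFreedom

variable {m' m : ℕ} {T : ℝ}

def dofRegion (m' m : ℕ) (T : ℝ) : Set ((Fin m' → ℝ) × (Fin m → ℝ)) :=
  {p | (∀ j, 0 ≤ p.1 j) ∧ (∀ i, 0 ≤ p.2 i) ∧ (∑ i, p.2 i ≤ 1 - 1/T) ∧
    ((∑ j, p.1 j) + (∑ i, p.2 i) ≤ 1)}

def dofCorners (m' m : ℕ) (T : ℝ) : Set ((Fin m' → ℝ) × (Fin m → ℝ)) :=
  {((0 : Fin m' → ℝ), (0 : Fin m → ℝ))} ∪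
    (⋃ j : Fin m', {((Pi.single j 1 : Fin m' → ℝ), (0 : Fin m → ℝ))}) ∪
    (⋃ i : Fin m, {((0 : Fin m' → ℝ), (1 - 1/T) • (Pi.single i 1 : Fin m → ℝ))}) ∪
    (⋃ j : Fin m', ⋃ i : Fin m,
      {((1/T) • (Pi.single j 1 : Fin m' → ℝ), (1 - 1/T) • (Pi.single i 1 : Fin m → ℝ))})

theorem convex_dofRegion : Convex ℝ (dofRegion m' m T) := by
  have hlin₂ : IsLinearMap ℝ fun p : (Fin m' → ℝ) × (Fin m → ℝ) => ∑ i, p.2 i :=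
    ⟨fun p q => by simp [Finset.sum_add_distrib], fun r p => by simp [Finset.mul_sum]⟩
  have hlin : IsLinearMap ℝ fun p : (Fin m' → ℝ) × (Fin m → ℝ) => ∑ j, p.1 j + ∑ i, p.2 i :=
    ⟨fun p q => by simp [Finset.sum_add_distrib, add_add_add_comm],
      fun r p => by simp [Finset.mul_sum, mul_add]⟩
  have h := ((convex_Ici 0).inter (convex_halfSpace_le hlin₂ (1 - 1/T))).inter
    (convex_halfSpace_le hlin 1)
  have hP : dofRegion m' m T =
      Ici 0 ∩ {p | ∑ i, p.2 i ≤ 1 - 1/T} ∩ {p | ∑ j, p.1 j + ∑ i, p.2 i ≤ 1} := by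
    ext p
    simp [dofRegion, Prod.le_def, Pi.le_def, and_assoc]
  exact hP ▸ h

theorem dofCorners_subset_dofRegion (hT : 1 ≤ T) : dofCorners m' m T ⊆ dofRegion m' m T := by
  have hT₀ : 0 ≤ T := by linarith
  have hc : 0 ≤ 1 - T⁻¹ := sub_nonneg.2 (inv_le_one_of_one_le₀ hT)
  simp only [dofCorners, union_subset_iff, singleton_subset_iff, iUnion_subset_iff]
  refine ⟨⟨⟨?_, fun j => ?_⟩, fun i => ?_⟩, fun j i => ?_⟩
  all_goals refine ⟨fun k => ?_, fun k => ?_, ?_, ?_⟩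
  all_goals simp [Pi.single_apply, ite_nonneg, hT₀, hc]

theorem prod_zero_subset_dofCorners :
    (insert 0 (range fun j => Pi.single j (1 : ℝ))) ×ˢ {0} ⊆ dofCorners m' m T := by
  rintro ⟨a, b⟩ ⟨ha, rfl : b = 0⟩
  rcases ha with rfl | ⟨j, rfl⟩ <;> simp [dofCorners]

theorem smul_prod_subset_dofCorners (i : Fin m) :
    ((1 / T) • insert 0 (range fun j => Pi.single j (1 : ℝ))) ×ˢ {(1 - 1 / T) • Pi.single i 1} ⊆
      dofCorners m' m T := by
  rintro ⟨a, b⟩ ⟨⟨a, ha, rfl⟩, rfl : b = _⟩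
  rcases ha with rfl | ⟨j, rfl⟩ <;> simp [dofCorners]

theorem dofRegion_subset_convexHull : dofRegion m' m T ⊆ convexHull ℝ (dofCorners m' m T) := by
  rintro ⟨x, y⟩ ⟨hx, hy, hy_sum, hxy_sum⟩
  set c := 1 - 1 / T
  obtain ⟨v, hv, hv_sum, rfl⟩ := exists_nonneg_sum_le_one_eq_smul hy hy_sum
  set t := ∑ i, v i
  have hy_eq : ∑ i, (c • v) i = c * t := by simp [t, Finset.mul_sum]
  obtain ⟨u, hu, hu_sum, rfl⟩ :=
    exists_nonneg_sum_le_one_eq_smul (c := 1 - c * t) hx (by linarith)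
  have hu_mem := mem_convexHull_insert_zero_range_single hu hu_sum
  let w : Option (Fin m) → ℝ := fun o => o.elim (1 - t) v
  let z : Option (Fin m) → (Fin m' → ℝ) × (Fin m → ℝ) :=
    fun o => o.elim (u, 0) fun i => ((1 / T) • u, c • Pi.single i 1)
  have hcomb : ∑ o, w o • z o = ((1 - c * t) • u, c • v) := by
    refine Prod.ext ?_ ?_
    · simp only [w, z, Fintype.sum_option, Prod.fst_add, Prod.fst_sum, Option.elim, Prod.smul_fst]
      rw [← Finset.sum_smul, smul_smul, ← add_smul]
      congr 1
      ring
    · ext k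
      simp [w, z, Fintype.sum_option, Prod.snd_sum, Pi.single_apply, mul_comm]
  rw [← hcomb]
  refine (convex_convexHull ℝ _).sum_mem (fun o _ => ?_) (by simp [w, t, Fintype.sum_option])
    (fun o _ => ?_)
  · cases o with
    | none => simpa [w] using hv_sum
    | some i => exact hv i
  · cases o with
    | none =>
      have h := prodMk_smul_mem_convexHull_smul_prod hu_mem 1 (0 : Fin m → ℝ)
      rw [one_smul, one_smul] at h
      exact convexHull_mono prod_zero_subset_dofCorners h
    | some i =>
      exact convexHull_mono (smul_prod_subset_dofCorners i)
        (prodMk_smul_mem_convexHull_smul_prod hu_mem _ _)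

end DegreesOfFreedom

theorem dof_region_eq_convexHull_general (m' m : ℕ) (T : ℝ) (hT : 1 ≤ T) :
    convexHull ℝ
      (({((0 : Fin m' → ℝ), (0 : Fin m → ℝ))} ∪
        (⋃ j : Fin m', {((Pi.single j 1 : Fin m' → ℝ), (0 : Fin m → ℝ))}) ∪
        (⋃ i : Fin m, {((0 : Fin m' → ℝ), (1 - 1/T) • (Pi.single i 1 : Fin m → ℝ))}) ∪
        (⋃ j : Fin m', ⋃ i : Fin m,
          {((1/T) • (Pi.single j 1 : Fin m' → ℝ),
            (1 - 1/T) • (Pi.single i 1 : Fin m → ℝ))})) :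
        Set ((Fin m' → ℝ) × (Fin m → ℝ))) =
    {p : (Fin m' → ℝ) × (Fin m → ℝ) |
      (∀ j, 0 ≤ p.1 j) ∧ (∀ i, 0 ≤ p.2 i) ∧ (∑ i, p.2 i ≤ 1 - 1/T) ∧
      ((∑ j, p.1 j) + (∑ i, p.2 i) ≤ 1)} :=
  Subset.antisymm (convexHull_min (dofCorners_subset_dofRegion hT) convex_dofRegion)
    dofRegion_subset_convexHull

/-- The achievable degrees-of-freedom polytope (no CSIT, `m'` static users,
`m` dynamic users with coherence time `T`) equals the convex hull of the origin, the
static unit vectors `e'_j`, the scaled dynamic unit vectors `(1 - 1/T) • e_i`, and the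
product-superposition points `(1/T) • e'_j + (1 - 1/T) • e_i`. -/
theorem dof_region_eq_convexHull (m' m : ℕ) (hm' : 1 ≤ m') (hm : 1 ≤ m)
    (T : ℝ) (hT : 1 ≤ T) :
    convexHull ℝ
      (({((0 : Fin m' → ℝ), (0 : Fin m → ℝ))} ∪
        (⋃ j : Fin m', {((Pi.single j 1 : Fin m' → ℝ), (0 : Fin m → ℝ))}) ∪
        (⋃ i : Fin m, {((0 : Fin m' → ℝ), (1 - 1/T) • (Pi.single i 1 : Fin m → ℝ))}) ∪
        (⋃ j : Fin m', ⋃ i : Fin m,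
          {((1/T) • (Pi.single j 1 : Fin m' → ℝ),
            (1 - 1/T) • (Pi.single i 1 : Fin m → ℝ))})) :
        Set ((Fin m' → ℝ) × (Fin m → ℝ))) =
    {p : (Fin m' → ℝ) × (Fin m → ℝ) |
      (∀ j, 0 ≤ p.1 j) ∧ (∀ i, 0 ≤ p.2 i) ∧ (∑ i, p.2 i ≤ 1 - 1/T) ∧
      ((∑ j, p.1 j) + (∑ i, p.2 i) ≤ 1)} :=
  dof_region_eq_convexHull_general m' m T hT
end

section
/- Let n ≥ 1, m ≥ 1, and let M_1, …, M_m, Y_1, …, Y_n, Z_1, …, Z_n be random variables on a common probability space, each taking values in a finite set. Define, for each k = 1, …, n, the tuples V_k = (M_2, …, M_m, Y_{k+1}, …, Y_n), W_k = (Y_{k+1}, …, Y_n), and U_k = (M_1, …, M_m, Z_1, …, Z_{k−1}). Then Σ_{k=1}^{n} I((M_1, …, M_m) ; Y_k | V_k) ≤ Σ_{k=1}^{n} I((U_k, W_k) ; Y_k | V_k) − Σ_{k=1}^{n} I(W_k ; Z_k | U_k). -/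
open MeasureTheory

/-- Joint probability mass of three finitely-valued random variables. -/
noncomputable def jointP {Ω A B C : Type*} [MeasurableSpace Ω] (μ : Measure Ω)
    (X : Ω → A) (Y : Ω → B) (Z : Ω → C) (a : A) (b : B) (c : C) : ℝ :=
  (μ {ω | X ω = a ∧ Y ω = b ∧ Z ω = c}).toReal

/-- Conditional mutual information `I(X ; Y | Z)` of finitely-valued random variables,
`I(X ; Y | Z) = ∑ p(x,y,z) log ( p(x,y,z) p(z) / (p(x,z) p(y,z)) )`. -/
noncomputable def condMI {Ω A B C : Type*} [MeasurableSpace Ω]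
    [Fintype A] [Fintype B] [Fintype C]
    (μ : Measure Ω) (X : Ω → A) (Y : Ω → B) (Z : Ω → C) : ℝ :=
  ∑ a : A, ∑ b : B, ∑ c : C,
    jointP μ X Y Z a b c *
      Real.log ((jointP μ X Y Z a b c * (μ {ω | Z ω = c}).toReal) /
        ((μ {ω | X ω = a ∧ Z ω = c}).toReal * (μ {ω | Y ω = b ∧ Z ω = c}).toReal))

/-!
Expanding every conditional mutual information as
`I(X ; Y | Z) = H(X, Z) + H(Y, Z) - H(X, Y, Z) - H(Z)`, the chain rule gives
`I((U_k, W_k) ; Y_k | V_k) = I(M ; Y_k | V_k) + I(Z_{<k} ; Y_k | M, Y_{>k})`, because `V_k`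
is a function of `(M, W_k)` and `W_k` a function of `V_k`. The claim, which in fact holds with
equality, is then the Csiszár sum identity
`∑ₖ I(Z_{<k} ; Y_k | M, Y_{>k}) = ∑ₖ I(Y_{>k} ; Z_k | M, Z_{<k})`: all entropies occurring in
it are of the form `H(M, Z_{<a}, Y_{≥b})`, and the difference of the two sums telescopes.
-/

section Mask

variable {Ω ι : Type*} {α : ι → Type*}

def mask (p : ι → Prop) [DecidablePred p] (X : (i : ι) → Ω → α i) (ω : Ω) (i : ι) :
    Option (α i) :=
  if p i then some (X i ω) else none

theorem mask_eq_mask_iff (p : ι → Prop) [DecidablePred p] {X : (i : ι) → Ω → α i}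
    {ω ω' : Ω} : mask p X ω = mask p X ω' ↔ ∀ i, p i → X i ω = X i ω' := by
  simp only [funext_iff, mask]
  refine forall_congr' fun i => ?_
  split_ifs with h <;> simp [h]

end Mask

section FinIndex

variable {n : ℕ} {P : Fin n → Prop}

theorem Fin.forall_val_le_iff (k : Fin n) :
    (∀ i : Fin n, (k : ℕ) ≤ i → P i) ↔ P k ∧ ∀ i : Fin n, (k : ℕ) < i → P i := by
  refine ⟨fun h => ⟨h k le_rfl, fun i hi => h i hi.le⟩, fun ⟨hk, h⟩ i hi => ?_⟩
  rcases hi.eq_or_lt with hi | hi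
  · exact Fin.ext hi ▸ hk
  · exact h i hi

theorem Fin.forall_val_lt_add_one_iff (k : Fin n) :
    (∀ i : Fin n, (i : ℕ) < k + 1 → P i) ↔ (∀ i : Fin n, (i : ℕ) < k → P i) ∧ P k := by
  refine ⟨fun h => ⟨fun i hi => h i (by omega), h k (by omega)⟩, fun ⟨h, hk⟩ i hi => ?_⟩
  rcases (Nat.lt_add_one_iff.1 hi).eq_or_lt with hi | hi
  · exact Fin.ext hi ▸ hk
  · exact h i hi

end FinIndex

theorem mul_log_mul_div_mul {p x y z : ℝ} (hp : 0 ≤ p) (hx : p ≤ x) (hy : p ≤ y) (hz : p ≤ z) :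
    p * Real.log (p * z / (x * y)) =
      p * Real.log p + p * Real.log z - p * Real.log x - p * Real.log y := by
  rcases hp.eq_or_lt with rfl | hp
  · simp
  have := hp.trans_le hx
  have := hp.trans_le hy
  have := hp.trans_le hz
  rw [Real.log_div (by positivity) (by positivity), Real.log_mul (by positivity) (by positivity),
    Real.log_mul (by positivity) (by positivity)]
  ring

section Entropy

variable {Ω : Type*} [MeasurableSpace Ω]

def FiberMeasurable {A : Type*} (X : Ω → A) : Prop :=
  ∀ a, MeasurableSet (X ⁻¹' {a})

namespace FiberMeasurable

variable {A B : Type*} {X : Ω → A} {Y : Ω → B}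

theorem of_measurable_top (hX : @Measurable Ω A _ ⊤ X) : FiberMeasurable X :=
  fun _ => hX MeasurableSpace.measurableSet_top

theorem measurableSet_preimage [Countable A] (hX : FiberMeasurable X) (s : Set A) :
    MeasurableSet (X ⁻¹' s) := by
  rw [← Set.biUnion_preimage_singleton]
  exact .biUnion s.to_countable fun a _ => hX a

theorem comp [Countable A] (hX : FiberMeasurable X) (f : A → B) :
    FiberMeasurable (fun ω => f (X ω)) :=
  fun b => hX.measurableSet_preimage (f ⁻¹' {b})

theorem prodMk (hX : FiberMeasurable X) (hY : FiberMeasurable Y) :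
    FiberMeasurable (fun ω => (X ω, Y ω)) := fun p => by
  rw [show (fun ω => (X ω, Y ω)) ⁻¹' {p} = X ⁻¹' {p.1} ∩ Y ⁻¹' {p.2} by
    ext; simp [Prod.ext_iff]]
  exact (hX _).inter (hY _)

theorem pi {ι : Type*} [Countable ι] {α : ι → Type*} {X : (i : ι) → Ω → α i}
    (hX : ∀ i, FiberMeasurable (X i)) : FiberMeasurable (fun ω i => X i ω) := fun x => by
  rw [show (fun ω i => X i ω) ⁻¹' {x} = ⋂ i, X i ⁻¹' {x i} by ext; simp [funext_iff]]
  exact .iInter fun i => hX i (x i)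

theorem mask {ι : Type*} [Countable ι] {α : ι → Type*} [∀ i, Countable (α i)]
    (p : ι → Prop) [DecidablePred p] {X : (i : ι) → Ω → α i}
    (hX : ∀ i, FiberMeasurable (X i)) : FiberMeasurable (_root_.mask p X) :=
  pi fun i => (hX i).comp fun x => if p i then some x else none

end FiberMeasurable

noncomputable def entropy (μ : Measure Ω) {A : Type*} [Fintype A] (X : Ω → A) : ℝ :=
  ∑ a, Real.negMulLog (μ.real (X ⁻¹' {a}))

variable (μ : Measure Ω) [IsFiniteMeasure μ] {A B C D E : Type*} [Fintype A] [Fintype B]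
  [Fintype C] [Fintype D] [Fintype E]

theorem sum_measureReal_preimage_mul_comp {X : Ω → A} (hX : FiberMeasurable X) (f : A → B)
    (F : B → ℝ) :
    ∑ a, μ.real (X ⁻¹' {a}) * F (f a) = ∑ b, μ.real ((fun ω => f (X ω)) ⁻¹' {b}) * F b := by
  classical
  rw [← Finset.sum_fiberwise Finset.univ f]
  refine Finset.sum_congr rfl fun b _ => ?_
  rw [Finset.sum_congr rfl fun a ha => by rw [(Finset.mem_filter.1 ha).2], ← Finset.sum_mul,
    sum_measureReal_preimage_singleton _ fun a _ => hX a]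
  congr 2
  ext ω
  simp

theorem sum_measureReal_mul_log_comp {X : Ω → A} (hX : FiberMeasurable X) (f : A → B) :
    ∑ a, μ.real (X ⁻¹' {a}) * Real.log (μ.real ((fun ω => f (X ω)) ⁻¹' {f a})) =
      -entropy μ (fun ω => f (X ω)) := by
  rw [sum_measureReal_preimage_mul_comp μ hX f
      fun b => Real.log (μ.real ((fun ω => f (X ω)) ⁻¹' {b})),
    entropy, ← Finset.sum_neg_distrib]
  simp only [Real.negMulLog, neg_mul, neg_neg]

theorem entropy_comp_of_injOn {X : Ω → A} (hX : FiberMeasurable X) {f : A → B}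
    (hf : Set.InjOn f (Set.range X)) : entropy μ (fun ω => f (X ω)) = entropy μ X := by
  rw [← neg_neg (entropy μ (fun ω => f (X ω))), ← sum_measureReal_mul_log_comp μ hX f, entropy,
    ← Finset.sum_neg_distrib]
  refine Finset.sum_congr rfl fun a _ => ?_
  rcases (X ⁻¹' {a}).eq_empty_or_nonempty with h | ⟨ω, rfl : X ω = _⟩
  · simp [h]
  · rw [show (fun ω' => f (X ω')) ⁻¹' {f (X ω)} = X ⁻¹' {X ω} from
      Set.ext fun ω' => ⟨fun h => hf ⟨ω', rfl⟩ ⟨ω, rfl⟩ h, fun h => congrArg f h⟩]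
    simp [Real.negMulLog]

theorem entropy_congr {X : Ω → A} {X' : Ω → B} (hX : FiberMeasurable X)
    (hX' : FiberMeasurable X') (h : ∀ ω ω', X ω = X ω' ↔ X' ω = X' ω') :
    entropy μ X = entropy μ X' := by
  have hpair := hX.prodMk hX'
  refine (entropy_comp_of_injOn μ hpair (f := Prod.fst) ?_).trans
    (entropy_comp_of_injOn μ hpair (f := Prod.snd) ?_).symm
  · rintro _ ⟨ω, rfl⟩ _ ⟨ω', rfl⟩ (e : X ω = X ω')
    simp [(h ω ω').1 e, e]
  · rintro _ ⟨ω, rfl⟩ _ ⟨ω', rfl⟩ (e : X' ω = X' ω')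
    simp [(h ω ω').2 e, e]

theorem condMI_eq_entropy {X : Ω → A} {Y : Ω → B} {Z : Ω → C} (hX : FiberMeasurable X)
    (hY : FiberMeasurable Y) (hZ : FiberMeasurable Z) :
    condMI μ X Y Z =
      entropy μ (fun ω => (X ω, Z ω)) + entropy μ (fun ω => (Y ω, Z ω)) -
        entropy μ (fun ω => (X ω, Y ω, Z ω)) - entropy μ Z := by
  set T := fun ω => (X ω, Y ω, Z ω)
  have hT : FiberMeasurable T := hX.prodMk (hY.prodMk hZ)
  have hXYZ : ∀ a b c, jointP μ X Y Z a b c = μ.real (T ⁻¹' {(a, b, c)}) := fun a b c => by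
    rw [jointP, measureReal_def]; congr 2; ext; simp [T]
  have hXZ : ∀ a c, (μ {ω | X ω = a ∧ Z ω = c}).toReal =
      μ.real ((fun ω => ((T ω).1, (T ω).2.2)) ⁻¹' {(a, c)}) := fun a c => by
    rw [measureReal_def]; congr 2; ext; simp [T]
  have hYZ : ∀ b c, (μ {ω | Y ω = b ∧ Z ω = c}).toReal =
      μ.real ((fun ω => (T ω).2) ⁻¹' {(b, c)}) := fun b c => by
    rw [measureReal_def]; congr 2; ext; simp [T]
  have hZ' : ∀ c, (μ {ω | Z ω = c}).toReal = μ.real ((fun ω => (T ω).2.2) ⁻¹' {c}) :=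
    fun _ => rfl
  calc condMI μ X Y Z
      = ∑ t : A × B × C, (μ.real (T ⁻¹' {t}) * Real.log (μ.real (T ⁻¹' {t})) +
          μ.real (T ⁻¹' {t}) * Real.log (μ.real ((fun ω => (T ω).2.2) ⁻¹' {t.2.2})) -
          μ.real (T ⁻¹' {t}) *
            Real.log (μ.real ((fun ω => ((T ω).1, (T ω).2.2)) ⁻¹' {(t.1, t.2.2)})) -
          μ.real (T ⁻¹' {t}) * Real.log (μ.real ((fun ω => (T ω).2) ⁻¹' {t.2}))) := by
        simp only [condMI, Fintype.sum_prod_type, hXYZ, hXZ, hYZ, hZ']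
        refine Finset.sum_congr rfl fun a _ => Finset.sum_congr rfl fun b _ =>
          Finset.sum_congr rfl fun c _ => mul_log_mul_div_mul measureReal_nonneg ?_ ?_ ?_ <;>
        exact measureReal_mono fun ω (h : T ω = _) => by simp [h]
    _ = -entropy μ T + -entropy μ Z - -entropy μ (fun ω => (X ω, Z ω)) -
          -entropy μ (fun ω => (Y ω, Z ω)) := by
        simp only [Finset.sum_add_distrib, Finset.sum_sub_distrib]
        congr 1; congr 1; congr 1
        · simp [entropy, Real.negMulLog]
        · exact sum_measureReal_mul_log_comp μ hT fun t => t.2.2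
        · exact sum_measureReal_mul_log_comp μ hT fun t => (t.1, t.2.2)
        · exact sum_measureReal_mul_log_comp μ hT Prod.snd
    _ = _ := by ring

theorem condMI_prod_eq_add {X : Ω → A} {T : Ω → B} {Y : Ω → C} {W : Ω → D} (f : A → E)
    (hX : FiberMeasurable X) (hT : FiberMeasurable T) (hY : FiberMeasurable Y)
    (hW : FiberMeasurable W) :
    condMI μ (fun ω => ((X ω, T ω), W ω)) Y (fun ω => (f (X ω), W ω)) =
      condMI μ X Y (fun ω => (f (X ω), W ω)) + condMI μ T Y (fun ω => (X ω, W ω)) := by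
  have hV := (hX.comp f).prodMk hW
  have hXW := hX.prodMk hW
  rw [condMI_eq_entropy μ ((hX.prodMk hT).prodMk hW) hY hV, condMI_eq_entropy μ hX hY hV,
    condMI_eq_entropy μ hT hY hXW,
    entropy_congr μ (((hX.prodMk hT).prodMk hW).prodMk hV) (hT.prodMk hXW) fun ω ω' => by
      simp only [Prod.mk.injEq]; grind,
    entropy_congr μ (((hX.prodMk hT).prodMk hW).prodMk (hY.prodMk hV))
      (hT.prodMk (hY.prodMk hXW)) fun ω ω' => by simp only [Prod.mk.injEq]; grind,
    entropy_congr μ (hX.prodMk hV) hXW fun ω ω' => by simp only [Prod.mk.injEq]; grind,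
    entropy_congr μ (hX.prodMk (hY.prodMk hV)) (hY.prodMk hXW) fun ω ω' => by
      simp only [Prod.mk.injEq]; grind]
  ring

theorem csiszar_sum_identity {n : ℕ} {δ ε : Fin n → Type*} [∀ i, Fintype (δ i)]
    [∀ i, Fintype (ε i)] {M : Ω → A} {Y : (i : Fin n) → Ω → δ i} {Z : (i : Fin n) → Ω → ε i}
    (hM : FiberMeasurable M) (hY : ∀ i, FiberMeasurable (Y i))
    (hZ : ∀ i, FiberMeasurable (Z i)) :
    ∑ k : Fin n, condMI μ (mask (fun i : Fin n => (i : ℕ) < k) Z) (Y k)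
        (fun ω => (M ω, mask (fun i : Fin n => (k : ℕ) < i) Y ω)) =
      ∑ k : Fin n, condMI μ (mask (fun i : Fin n => (k : ℕ) < i) Y) (Z k)
        (fun ω => (M ω, mask (fun i : Fin n => (i : ℕ) < k) Z ω)) := by
  have hYm : ∀ (p : Fin n → Prop) [DecidablePred p], FiberMeasurable (mask p Y) :=
    fun p _ => .mask p hY
  have hZm : ∀ (p : Fin n → Prop) [DecidablePred p], FiberMeasurable (mask p Z) :=
    fun p _ => .mask p hZ
  set J : ℕ → ℕ → ℝ := fun a b => entropy μ fun ω =>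
    (M ω, mask (fun i : Fin n => (i : ℕ) < a) Z ω, mask (fun i : Fin n => b ≤ (i : ℕ)) Y ω)
  have hJ : ∀ a b : ℕ, FiberMeasurable fun ω =>
      (M ω, mask (fun i : Fin n => (i : ℕ) < a) Z ω, mask (fun i : Fin n => b ≤ (i : ℕ)) Y ω) :=
    fun _ _ => hM.prodMk ((hZm _).prodMk (hYm _))
  have hL : ∀ k : Fin n, condMI μ (mask (fun i : Fin n => (i : ℕ) < k) Z) (Y k)
      (fun ω => (M ω, mask (fun i : Fin n => (k : ℕ) < i) Y ω)) =
        J k (k + 1) + J 0 k - J k k - J 0 (k + 1) := fun k => by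
    rw [condMI_eq_entropy μ (hZm _) (hY k) (hM.prodMk (hYm _)),
      entropy_congr μ ((hZm _).prodMk (hM.prodMk (hYm _))) (hJ k (k + 1)) fun ω ω' => by
        simp only [Prod.mk.injEq, mask_eq_mask_iff, Nat.add_one_le_iff]; tauto,
      entropy_congr μ ((hY k).prodMk (hM.prodMk (hYm _))) (hJ 0 k) fun ω ω' => by
        simp only [Prod.mk.injEq, mask_eq_mask_iff, Fin.forall_val_le_iff, Nat.not_lt_zero,
          false_imp_iff, implies_true, true_and]
        tauto,
      entropy_congr μ ((hZm _).prodMk ((hY k).prodMk (hM.prodMk (hYm _)))) (hJ k k)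
        fun ω ω' => by simp only [Prod.mk.injEq, mask_eq_mask_iff, Fin.forall_val_le_iff]; tauto,
      entropy_congr μ (hM.prodMk (hYm _)) (hJ 0 (k + 1)) fun ω ω' => by
        simp only [Prod.mk.injEq, mask_eq_mask_iff, Nat.add_one_le_iff, Nat.not_lt_zero,
          false_imp_iff, implies_true, true_and]]
  have hR : ∀ k : Fin n, condMI μ (mask (fun i : Fin n => (k : ℕ) < i) Y) (Z k)
      (fun ω => (M ω, mask (fun i : Fin n => (i : ℕ) < k) Z ω)) =
        J k (k + 1) + J (k + 1) n - J (k + 1) (k + 1) - J k n := fun k => by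
    rw [condMI_eq_entropy μ (hYm _) (hZ k) (hM.prodMk (hZm _)),
      entropy_congr μ ((hYm _).prodMk (hM.prodMk (hZm _))) (hJ k (k + 1)) fun ω ω' => by
        simp only [Prod.mk.injEq, mask_eq_mask_iff, Nat.add_one_le_iff]; tauto,
      entropy_congr μ ((hZ k).prodMk (hM.prodMk (hZm _))) (hJ (k + 1) n) fun ω ω' => by
        simp only [Prod.mk.injEq, mask_eq_mask_iff, Fin.forall_val_lt_add_one_iff,
          not_le.2 (Fin.is_lt _), false_imp_iff, implies_true, and_true]
        tauto,
      entropy_congr μ ((hYm _).prodMk ((hZ k).prodMk (hM.prodMk (hZm _))))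
        (hJ (k + 1) (k + 1)) fun ω ω' => by
        simp only [Prod.mk.injEq, mask_eq_mask_iff, Nat.add_one_le_iff,
          Fin.forall_val_lt_add_one_iff]
        tauto,
      entropy_congr μ (hM.prodMk (hZm _)) (hJ k n) fun ω ω' => by
        simp only [Prod.mk.injEq, mask_eq_mask_iff, not_le.2 (Fin.is_lt _), false_imp_iff,
          implies_true, and_true]]
  have telescope : ∀ f : ℕ → ℝ, ∑ k : Fin n, (f (k + 1) - f k) = f n - f 0 := fun f => by
    rw [Fin.sum_univ_eq_sum_range (fun k => f (k + 1) - f k), Finset.sum_range_sub]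
  have hdiag : ∑ k : Fin n, (J (k + 1) (k + 1) - J k k) = J n n - J 0 0 := telescope fun j => J j j
  have hrow : ∑ k : Fin n, (J 0 (k + 1) - J 0 k) = J 0 n - J 0 0 := telescope (J 0)
  have hcol : ∑ k : Fin n, (J (k + 1) n - J k n) = J n n - J 0 n := telescope fun j => J j n
  rw [Finset.sum_congr rfl fun k _ => hL k, Finset.sum_congr rfl fun k _ => hR k]
  simp only [Finset.sum_add_distrib, Finset.sum_sub_distrib] at hdiag hrow hcol ⊢
  linarith

end Entropy

theorem first_dynamic_user_rate_bound_general (n m : ℕ)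
    {Ω : Type*} [MeasurableSpace Ω] (μ : Measure Ω) [IsProbabilityMeasure μ]
    {γ : Fin m → Type*} {δ ε : Fin n → Type*}
    [∀ i, Fintype (γ i)] [∀ i, Fintype (δ i)] [∀ i, Fintype (ε i)]
    (M : (i : Fin m) → Ω → γ i) (Y : (i : Fin n) → Ω → δ i) (Z : (i : Fin n) → Ω → ε i)
    (hM : ∀ i, @Measurable Ω (γ i) _ ⊤ (M i))
    (hY : ∀ i, @Measurable Ω (δ i) _ ⊤ (Y i))
    (hZ : ∀ i, @Measurable Ω (ε i) _ ⊤ (Z i))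
    (V : (k : Fin n) → Ω → ((i : Fin m) → Option (γ i)) × ((i : Fin n) → Option (δ i)))
    (hV : ∀ k ω, V k ω =
      ((fun i : Fin m => if 0 < (i : ℕ) then some (M i ω) else none),
       (fun i : Fin n => if (k : ℕ) < (i : ℕ) then some (Y i ω) else none)))
    (W : (k : Fin n) → Ω → ((i : Fin n) → Option (δ i)))
    (hW : ∀ k ω, W k ω =
      fun i : Fin n => if (k : ℕ) < (i : ℕ) then some (Y i ω) else none)
    (U : (k : Fin n) → Ω → ((i : Fin m) → γ i) × ((i : Fin n) → Option (ε i)))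
    (hU : ∀ k ω, U k ω =
      ((fun i : Fin m => M i ω),
       (fun i : Fin n => if (i : ℕ) < (k : ℕ) then some (Z i ω) else none))) :
    ∑ k : Fin n, condMI μ (fun ω (i : Fin m) => M i ω) (Y k) (V k) ≤
      (∑ k : Fin n, condMI μ (fun ω => (U k ω, W k ω)) (Y k) (V k)) -
        ∑ k : Fin n, condMI μ (W k) (Z k) (U k) := by
  have hM' : FiberMeasurable fun ω (i : Fin m) => M i ω :=
    .pi fun i => .of_measurable_top (hM i)
  have hY' : ∀ i, FiberMeasurable (Y i) := fun i => .of_measurable_top (hY i)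
  have hZ' : ∀ i, FiberMeasurable (Z i) := fun i => .of_measurable_top (hZ i)
  have hW' : ∀ k, W k = mask (fun i : Fin n => (k : ℕ) < i) Y := fun k => funext (hW k)
  have hU' : ∀ k, U k = fun ω =>
      (fun i : Fin m => M i ω, mask (fun i : Fin n => (i : ℕ) < k) Z ω) :=
    fun k => funext (hU k)
  simp only [hW', hU']
  have chain : ∀ k : Fin n,
      condMI μ (fun ω => ((fun i => M i ω, mask (fun i : Fin n => (i : ℕ) < k) Z ω),
        mask (fun i : Fin n => (k : ℕ) < i) Y ω)) (Y k) (V k) =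
      condMI μ (fun ω i => M i ω) (Y k) (V k) +
        condMI μ (mask (fun i : Fin n => (i : ℕ) < k) Z) (Y k)
          (fun ω => (fun i => M i ω, mask (fun i : Fin n => (k : ℕ) < i) Y ω)) := fun k => by
    rw [funext (hV k)]
    exact condMI_prod_eq_add μ
      (fun (v : (i : Fin m) → γ i) (i : Fin m) => if 0 < (i : ℕ) then some (v i) else none)
      hM' (.mask _ hZ') (hY' k) (.mask _ hY')
  rw [Finset.sum_congr rfl fun k _ => chain k, Finset.sum_add_distrib,
    csiszar_sum_identity μ hM' hY' hZ', add_sub_cancel_right]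

/-- Csiszár-sum-identity bound
`∑ₖ I(M₁…M_m ; Y_k | V_k) ≤ ∑ₖ I((U_k, W_k) ; Y_k | V_k) − ∑ₖ I(W_k ; Z_k | U_k)`,
where `V_k = (M₂…M_m, Y_{k+1}…Yₙ)`, `W_k = (Y_{k+1}…Yₙ)`, and
`U_k = (M₁…M_m, Z₁…Z_{k-1})`, partial tuples being encoded as `Option`-valued
functions on the index type. -/
theorem first_dynamic_user_rate_bound (n m : ℕ) (hn : 1 ≤ n) (hm : 1 ≤ m)
    {Ω : Type*} [MeasurableSpace Ω] (μ : Measure Ω) [IsProbabilityMeasure μ]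
    {γ : Fin m → Type*} {δ ε : Fin n → Type*}
    [∀ i, Fintype (γ i)] [∀ i, Fintype (δ i)] [∀ i, Fintype (ε i)]
    (M : (i : Fin m) → Ω → γ i) (Y : (i : Fin n) → Ω → δ i) (Z : (i : Fin n) → Ω → ε i)
    (hM : ∀ i, @Measurable Ω (γ i) _ ⊤ (M i))
    (hY : ∀ i, @Measurable Ω (δ i) _ ⊤ (Y i))
    (hZ : ∀ i, @Measurable Ω (ε i) _ ⊤ (Z i))
    (V : (k : Fin n) → Ω → ((i : Fin m) → Option (γ i)) × ((i : Fin n) → Option (δ i)))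
    (hV : ∀ k ω, V k ω =
      ((fun i : Fin m => if 0 < (i : ℕ) then some (M i ω) else none),
       (fun i : Fin n => if (k : ℕ) < (i : ℕ) then some (Y i ω) else none)))
    (W : (k : Fin n) → Ω → ((i : Fin n) → Option (δ i)))
    (hW : ∀ k ω, W k ω =
      fun i : Fin n => if (k : ℕ) < (i : ℕ) then some (Y i ω) else none)
    (U : (k : Fin n) → Ω → ((i : Fin m) → γ i) × ((i : Fin n) → Option (ε i)))
    (hU : ∀ k ω, U k ω =
      ((fun i : Fin m => M i ω),
       (fun i : Fin n => if (i : ℕ) < (k : ℕ) then some (Z i ω) else none))) :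
    ∑ k : Fin n, condMI μ (fun ω (i : Fin m) => M i ω) (Y k) (V k) ≤
      (∑ k : Fin n, condMI μ (fun ω => (U k ω, W k ω)) (Y k) (V k)) -
        ∑ k : Fin n, condMI μ (W k) (Z k) (U k) :=
  first_dynamic_user_rate_bound_general n m μ M Y Z hM hY hZ V hV W hW U hU
end
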